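/- arXiv:0909.0151 — 3 statements merged into one kernel-verified Lean document; each statement's English description precedes it below -/
import Mathlib

section
/- Let $n \ge 2$. Consider the matrix over $\mathbb{Q}$ whose rows are indexed by the subsets $J \subseteq \{1,\dots,2n-1\}$ of cardinality $n-2$, whose columns are indexed by the subsets $I \subseteq \{1,\dots,2n-1\}$ of cardinality $n$, and whose $(J,I)$ entry is $1$ if $J \subseteq I$ and $0$ otherwise. This matrix has maximal rank, namely its rank equals $\binom{2n-1}{n-2}$. -/
open Finset Matrix

variable {α : Type*} [Fintype α] [DecidableEq α]

lemma cnt_succ (u : Finset α) :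
    (Finset.univ.filter fun T : Finset α => T.card = u.card + 1 ∧ u ⊆ T).card
      = Fintype.card α - u.card := by
  rw [← Finset.card_compl u]
  symm
  apply Finset.card_bij (fun x _ => insert x u)
  · intro x hx
    simp only [Finset.mem_compl] at hx
    simp [Finset.mem_filter, Finset.card_insert_of_notMem hx,
      Finset.subset_insert]
  · intro x hx y hy h
    simp only [Finset.mem_compl] at hx hy
    have : x ∈ insert y u := h ▸ Finset.mem_insert_self x u
    rcases Finset.mem_insert.1 this with h' | h'
    · exact h'
    · exact absurd h' hx
  · intro T hT
    simp only [Finset.mem_filter] at hT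
    obtain ⟨-, hc, hsub⟩ := hT
    have h1 : (T \ u).card = 1 := by
      rw [Finset.card_sdiff_of_subset hsub, hc]; omega
    obtain ⟨x, hx⟩ := Finset.card_eq_one.1 h1
    have hxu : x ∉ u := by
      have : x ∈ T \ u := hx ▸ Finset.mem_singleton_self x
      exact (Finset.mem_sdiff.1 this).2
    refine ⟨x, Finset.mem_compl.2 hxu, ?_⟩
    have : u ∪ T \ u = T := Finset.union_sdiff_of_subset hsub
    rw [hx] at this
    rw [← this]
    ext y; simp [Finset.mem_insert, or_comm]

lemma cnt_self (u : Finset α) :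
    (Finset.univ.filter fun T : Finset α => T.card = u.card ∧ u ⊆ T).card = 1 := by
  rw [Finset.card_eq_one]
  refine ⟨u, ?_⟩
  ext T
  simp only [Finset.mem_filter, Finset.mem_singleton, Finset.mem_univ, true_and]
  constructor
  · rintro ⟨hc, hsub⟩
    exact (Finset.eq_of_subset_of_card_le hsub hc.le).symm
  · rintro rfl; exact ⟨rfl, Finset.Subset.refl _⟩

lemma cnt_zero (u : Finset α) {r : ℕ} (h : r < u.card) :
    (Finset.univ.filter fun T : Finset α => T.card = r ∧ u ⊆ T).card = 0 := by
  rw [Finset.card_eq_zero, Finset.filter_eq_empty_iff]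
  rintro T - ⟨hc, hsub⟩
  exact absurd (Finset.card_le_card hsub) (by omega)

lemma cnt_between {J I : Finset α} (hJI : J ⊆ I) (hlt : J.card < I.card) :
    (Finset.univ.filter fun S : Finset α =>
        S.card = I.card - 1 ∧ J ⊆ S ∧ S ⊆ I).card = I.card - J.card := by
  rw [← Finset.card_sdiff_of_subset hJI]
  symm
  apply Finset.card_bij (fun x _ => I.erase x)
  · intro x hx
    simp only [Finset.mem_sdiff] at hx
    refine Finset.mem_filter.2 ⟨Finset.mem_univ _, Finset.card_erase_of_mem hx.1, ?_, Finset.erase_subset x I⟩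
    intro y hy
    exact Finset.mem_erase.2 ⟨fun h => hx.2 (h ▸ hy), hJI hy⟩
  · intro x hx y hy h
    simp only [Finset.mem_sdiff] at hx hy
    by_contra hne
    have hx' : x ∈ I.erase y := Finset.mem_erase.2 ⟨hne, hx.1⟩
    rw [← h] at hx'
    exact (Finset.mem_erase.1 hx').1 rfl
  · intro S hS
    simp only [Finset.mem_filter] at hS
    obtain ⟨-, hc, hJS, hSI⟩ := hS
    have h1 : (I \ S).card = 1 := by rw [Finset.card_sdiff_of_subset hSI, hc]; omega
    obtain ⟨x, hx⟩ := Finset.card_eq_one.1 h1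
    have hxm : x ∈ I \ S := hx ▸ Finset.mem_singleton_self x
    rw [Finset.mem_sdiff] at hxm
    refine ⟨x, Finset.mem_sdiff.2 ⟨hxm.1, fun h => hxm.2 (hJS h)⟩, ?_⟩
    symm
    apply Finset.eq_of_subset_of_card_le
    · intro y hy
      exact Finset.mem_erase.2 ⟨fun h => hxm.2 (h ▸ hy), hSI hy⟩
    · rw [Finset.card_erase_of_mem hxm.1, hc]

variable {α : Type*} [Fintype α] [DecidableEq α]

def Wm (α : Type*) [Fintype α] [DecidableEq α] (a b : ℕ) :
    Matrix {J : Finset α // J.card = a} {I : Finset α // I.card = b} ℚ :=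
  Matrix.of fun J I => if (J : Finset α) ⊆ (I : Finset α) then 1 else 0

lemma sum_subtype_card {b : ℕ} (f : Finset α → ℚ) :
    (∑ T : {T : Finset α // T.card = b}, f T.1)
      = ∑ T ∈ Finset.univ.filter (fun T : Finset α => T.card = b), f T := by
  exact (Finset.sum_subtype (p := fun T : Finset α => T.card = b)
    (Finset.univ.filter fun T : Finset α => T.card = b) (by simp) f).symm

lemma sum_ite_card {b : ℕ} (P : Finset α → Prop) [DecidablePred P] :
    (∑ T : {T : Finset α // T.card = b}, if P T.1 then (1 : ℚ) else 0)
      = ((Finset.univ.filter fun T : Finset α => T.card = b ∧ P T).card : ℚ) := by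
  rw [sum_subtype_card (fun T => if P T then (1:ℚ) else 0), Finset.sum_boole]
  congr 1
  rw [Finset.filter_filter]

lemma Wm_mul_transpose_apply (a b : ℕ) (J J' : {J : Finset α // J.card = a}) :
    (Wm α a b * (Wm α a b)ᵀ) J J'
      = ((Finset.univ.filter fun T : Finset α =>
          T.card = b ∧ (J : Finset α) ∪ (J' : Finset α) ⊆ T).card : ℚ) := by
  rw [Matrix.mul_apply, ← sum_ite_card]
  refine Finset.sum_congr rfl fun T _ => ?_
  simp only [Wm, Matrix.transpose_apply, Matrix.of_apply, Finset.union_subset_iff]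
  split_ifs with h1 h2 h3 h3 <;> simp_all

lemma Wm_transpose_mul_apply (a b : ℕ) (I I' : {I : Finset α // I.card = b}) :
    ((Wm α a b)ᵀ * Wm α a b) I I'
      = ((((I : Finset α) ∩ (I' : Finset α)).card.choose a : ℕ) : ℚ) := by
  rw [Matrix.mul_apply, ← Finset.card_powersetCard]
  have : ((I : Finset α) ∩ (I' : Finset α)).powersetCard a
      = Finset.univ.filter fun S : Finset α => S.card = a ∧ S ⊆ (I : Finset α) ∩ (I' : Finset α) := by
    ext S; simp [Finset.mem_powersetCard, and_comm]
  rw [this, ← sum_ite_card]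
  refine Finset.sum_congr rfl fun S _ => ?_
  simp only [Wm, Matrix.transpose_apply, Matrix.of_apply, Finset.subset_inter_iff]
  split_ifs with h1 h2 h3 h3 <;> simp_all

lemma gram_id (a : ℕ) :
    Wm α (a + 1) (a + 2) * (Wm α (a + 1) (a + 2))ᵀ
      = (Wm α a (a + 1))ᵀ * Wm α a (a + 1)
        + (((Fintype.card α : ℚ)) - 2 * (a + 1)) • 1 := by
  ext J J'
  rw [Wm_mul_transpose_apply]
  rw [Matrix.add_apply, Wm_transpose_mul_apply, Matrix.smul_apply, Matrix.one_apply,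
    smul_eq_mul]
  obtain ⟨J, hJ⟩ := J
  obtain ⟨J', hJ'⟩ := J'
  simp only [Subtype.mk.injEq]
  have hm : J.card ≤ Fintype.card α := Finset.card_le_univ J
  have hcu : (J ∪ J').card + (J ∩ J').card = 2 * (a + 1) := by
    rw [Finset.card_union_add_card_inter, hJ, hJ']; ring
  by_cases hEq : J = J'
  · subst hEq
    rw [if_pos rfl]
    rw [Finset.union_self, Finset.inter_self, hJ]
    have : (Finset.univ.filter fun T : Finset α =>
        T.card = a + 2 ∧ J ⊆ T).card = Fintype.card α - J.card := by
      have := cnt_succ J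
      rw [hJ] at this
      convert this using 3
    rw [hJ] at this
    rw [this, Nat.choose_succ_self_right]
    rw [Nat.cast_sub (by omega)]
    push_cast
    ring
  · rw [if_neg hEq, mul_zero, add_zero]
    have hilt : (J ∩ J').card < a + 1 := by
      rcases lt_or_eq_of_le (le_trans (Finset.card_le_card Finset.inter_subset_left) hJ.le) with h | h
      · exact h
      · exfalso
        apply hEq
        have h1 : J ∩ J' = J :=
          Finset.eq_of_subset_of_card_le Finset.inter_subset_left (by rw [h, hJ])
        have h2 : J ⊆ J' := by rw [← h1]; exact Finset.inter_subset_right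
        exact Finset.eq_of_subset_of_card_le h2 (by rw [hJ, hJ'])
    rcases Nat.lt_or_ge (J ∩ J').card a with hlt | hge
    · -- card union ≥ a + 3 > a + 2
      rw [cnt_zero _ (by omega), Nat.choose_eq_zero_of_lt (by omega)]
    · -- inter card = a, union card = a + 2
      have hia : (J ∩ J').card = a := by omega
      have huc : (J ∪ J').card = a + 2 := by omega
      have := cnt_self (J ∪ J')
      rw [huc] at this
      rw [this, hia, Nat.choose_self]

lemma quad {R C : Type*} [Fintype R] [Fintype C] (A : Matrix R C ℚ) (x : R → ℚ) :
    x ⬝ᵥ (A * Aᵀ).mulVec x = (Matrix.vecMul x A) ⬝ᵥ (Matrix.vecMul x A) := by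
  rw [← Matrix.mulVec_mulVec, Matrix.dotProduct_mulVec, Matrix.mulVec_transpose]

lemma quad' {R C : Type*} [Fintype R] [Fintype C] (A : Matrix R C ℚ) (x : C → ℚ) :
    x ⬝ᵥ (Aᵀ * A).mulVec x = (A.mulVec x) ⬝ᵥ (A.mulVec x) := by
  rw [← Matrix.mulVec_mulVec, Matrix.dotProduct_mulVec, Matrix.vecMul_transpose]

lemma rank_of_FR {R C : Type*} [Fintype R] [Fintype C] [DecidableEq R] (A : Matrix R C ℚ)
    (h : ∀ x, Matrix.vecMul x A = 0 → x = 0) : A.rank = Fintype.card R := by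
  rw [← Matrix.rank_self_mul_transpose]
  apply Matrix.rank_of_isUnit
  rw [Matrix.isUnit_iff_isUnit_det, isUnit_iff_ne_zero]
  intro hdet
  obtain ⟨v, hv0, hv⟩ := Matrix.exists_mulVec_eq_zero_iff.2 hdet
  have h0 : v ⬝ᵥ (A * Aᵀ).mulVec v = 0 := by rw [hv]; simp
  rw [quad] at h0
  exact hv0 (h v (dotProduct_self_eq_zero.1 h0))

lemma FR_W (k : ℕ) (hk : 2 * k < Fintype.card α) :
    ∀ x : {J : Finset α // J.card = k} → ℚ,
      Matrix.vecMul x (Wm α k (k + 1)) = 0 → x = 0 := by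
  intro x hx
  have h0 : x ⬝ᵥ (Wm α k (k + 1) * (Wm α k (k + 1))ᵀ).mulVec x = 0 := by
    rw [quad, hx]; simp
  have hself : (0 : ℚ) ≤ x ⬝ᵥ x := Finset.sum_nonneg fun i _ => mul_self_nonneg _
  cases k with
  | zero =>
    have hone : Wm α 0 1 * (Wm α 0 1)ᵀ = ((Fintype.card α : ℚ)) • 1 := by
      ext J J'
      have hJJ : J = J' := Subtype.ext (by
        rw [Finset.card_eq_zero.1 J.2, Finset.card_eq_zero.1 J'.2])
      subst hJJ
      rw [Wm_mul_transpose_apply, Matrix.smul_apply, Matrix.one_apply_eq, smul_eq_mul,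
        mul_one]
      have hJe : (J : Finset α) = ∅ := Finset.card_eq_zero.1 J.2
      have := cnt_succ (∅ : Finset α)
      simp only [Finset.card_empty, Nat.sub_zero, zero_add] at this
      rw [show ((J : Finset α) ∪ (J : Finset α)) = ∅ by rw [hJe, Finset.union_self]]
      exact_mod_cast this
    rw [hone] at h0
    rw [Matrix.smul_mulVec, Matrix.one_mulVec, dotProduct_smul, smul_eq_mul] at h0
    have hc : (0 : ℚ) < (Fintype.card α : ℚ) := by
      have : 0 < Fintype.card α := by omega
      exact_mod_cast this
    have : x ⬝ᵥ x = 0 := by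
      rcases mul_eq_zero.1 h0 with h | h
      · exact absurd h (ne_of_gt hc)
      · exact h
    exact dotProduct_self_eq_zero.1 this
  | succ a =>
    rw [gram_id a] at h0
    rw [Matrix.add_mulVec, dotProduct_add] at h0
    rw [Matrix.smul_mulVec, Matrix.one_mulVec, dotProduct_smul, smul_eq_mul] at h0
    have h1 : (0 : ℚ) ≤ x ⬝ᵥ ((Wm α a (a + 1))ᵀ * Wm α a (a + 1)).mulVec x := by
      rw [quad']
      exact Finset.sum_nonneg fun i _ => mul_self_nonneg _
    have hc : (0 : ℚ) < (Fintype.card α : ℚ) - 2 * (a + 1) := by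
      have h2 : (2 * (a + 1) : ℚ) < (Fintype.card α : ℚ) := by exact_mod_cast hk
      linarith
    have hxx : x ⬝ᵥ x = 0 := by nlinarith
    exact dotProduct_self_eq_zero.1 hxx

lemma prod_id (k : ℕ) :
    Wm α k (k + 1) * Wm α (k + 1) (k + 2) = (2 : ℚ) • Wm α k (k + 2) := by
  ext J I
  rw [Matrix.mul_apply]
  have : ∀ S : {S : Finset α // S.card = k + 1},
      Wm α k (k + 1) J S * Wm α (k + 1) (k + 2) S I
        = if ((J : Finset α) ⊆ S ∧ (S : Finset α) ⊆ I) then (1 : ℚ) else 0 := by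
    intro S
    simp only [Wm, Matrix.of_apply]
    split_ifs with h1 h2 h3 h3 <;> simp_all
  rw [Finset.sum_congr rfl fun S _ => this S,
    sum_ite_card (b := k + 1) (fun S : Finset α => (J : Finset α) ⊆ S ∧ S ⊆ (I : Finset α))]
  simp only [Wm, Matrix.smul_apply, Matrix.of_apply, smul_eq_mul]
  by_cases hJI : (J : Finset α) ⊆ (I : Finset α)
  · rw [if_pos hJI, mul_one]
    have hlt : (J : Finset α).card < (I : Finset α).card := by
      rw [J.2, I.2]; omega
    have := cnt_between hJI hlt
    rw [I.2, J.2] at this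
    have h2 : k + 2 - 1 = k + 1 := rfl
    rw [h2] at this
    rw [this]
    norm_num
  · rw [if_neg hJI, mul_zero, Nat.cast_eq_zero, Finset.card_eq_zero,
      Finset.filter_eq_empty_iff]
    rintro S - ⟨-, hJS, hSI⟩
    exact hJI (hJS.trans hSI)

lemma vecMul_smul_mat {R C : Type*} [Fintype R] (c : ℚ) (M : Matrix R C ℚ) (x : R → ℚ) :
    Matrix.vecMul x (c • M) = c • Matrix.vecMul x M := by
  ext j
  simp [Matrix.vecMul, dotProduct, Finset.mul_sum, mul_left_comm]

lemma FR_W2 (k : ℕ) (hk : 2 * k + 3 ≤ Fintype.card α) :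
    ∀ x : {J : Finset α // J.card = k} → ℚ,
      Matrix.vecMul x (Wm α k (k + 2)) = 0 → x = 0 := by
  intro x hx
  have h2 : Matrix.vecMul x ((2 : ℚ) • Wm α k (k + 2)) = 0 := by
    rw [vecMul_smul_mat, hx, smul_zero]
  rw [← prod_id, ← Matrix.vecMul_vecMul] at h2
  have hB := FR_W (α := α) k (by omega)
  have hC := FR_W (α := α) (k + 1) (by omega)
  exact hB x (hC _ h2)

/-- The incidence matrix over `ℚ` whose rows are indexed by the `(n-2)`-element
subsets `J` of `{1, …, 2n-1}`, whose columns are indexed by the `n`-element subsets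
`I` of `{1, …, 2n-1}`, and whose `(J, I)` entry is `1` if `J ⊆ I` and `0` otherwise,
has maximal rank, namely rank equal to `C(2n-1, n-2)`. -/
theorem stmt3 (n : ℕ) (hn : 2 ≤ n) :
    (Matrix.of fun (J : {J : Finset (Fin (2 * n - 1)) // J.card = n - 2})
        (I : {I : Finset (Fin (2 * n - 1)) // I.card = n}) =>
        if (J : Finset (Fin (2 * n - 1))) ⊆ (I : Finset (Fin (2 * n - 1)))
        then (1 : ℚ) else 0).rank =
      Nat.choose (2 * n - 1) (n - 2) := by
  obtain ⟨k, rfl⟩ : ∃ k, n = k + 2 := ⟨n - 2, by omega⟩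
  show (Wm (Fin (2 * (k + 2) - 1)) k (k + 2)).rank = Nat.choose (2 * (k + 2) - 1) k
  rw [rank_of_FR _ (FR_W2 k (by simp; omega))]
  simp
end

section
/- Let $Q$ be a homogeneous polynomial of degree $r$ in $N$ variables over $\mathbb{C}$, let $a, b \in \mathbb{C}^N$, and let $y_a, y_b$ be natural numbers such that $Q$ vanishes with multiplicity at least $y_a$ at $a$ and with multiplicity at least $y_b$ at $b$. Then for all scalars $s, t \in \mathbb{C}$, the polynomial $Q$ vanishes with multiplicity at least $y_a + y_b - r$ at the point $s\,a + t\,b$; that is, $Q$ vanishes with multiplicity at least $y_a + y_b - r$ at every point of the line spanned by $a$ and $b$. -/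
/-!
The binary form `F(s, t) = Q(s a + t b)` is homogeneous of degree `r`, and its coefficient of
`s^i t^j` is both the `i`-th Taylor coefficient at `0` of `u ↦ Q(b + u a)` and the `j`-th one of
`u ↦ Q(a + u b)`. If `Q` vanishes to order `α` at `a` and `β` at `b` with `r < α + β`, every
monomial of `F` has `i < β` or `j < α`, so `F = 0`. A `k`-th partial derivative of `Q` is
homogeneous of degree `r - k` and vanishes to orders `y_a - k` and `y_b - k`, so this applies to it
whenever `k < y_a + y_b - r` (derivatives of order `k > r` vanish identically).
-/

/-- A polynomial `Q ∈ ℂ[x_1, …, x_N]` vanishes with multiplicity at least `y` at a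
point `p ∈ ℂ^N` if every iterated partial derivative of `Q` of total order at most
`y - 1` (equivalently, of total order `< y`) evaluates to `0` at `p`. -/
def VanishesToOrder {σ : Type*} (Q : MvPolynomial σ ℂ) (p : σ → ℂ) (y : ℕ) : Prop :=
  ∀ L : List σ, L.length < y →
    MvPolynomial.eval p (L.foldr (fun i q => MvPolynomial.pderiv i q) Q) = 0

open MvPolynomial
open scoped Polynomial

namespace MvPolynomial

variable {R σ : Type*} [CommSemiring R]

theorem derivative_aeval [Fintype σ] (f : σ → R[X]) (φ : MvPolynomial σ R) :
    Polynomial.derivative (aeval f φ) =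
      ∑ i, aeval f (pderiv i φ) * Polynomial.derivative (f i) := by
  classical
  induction φ using MvPolynomial.induction_on with
  | C c => simp
  | add p q hp hq => simp only [map_add, hp, hq, add_mul, Finset.sum_add_distrib]
  | mul_X p j hp =>
    simp only [map_mul, aeval_X, Polynomial.derivative_mul, hp, Finset.sum_mul, Derivation.leibniz,
      pderiv_X, Pi.single_apply, smul_eq_mul, mul_ite, mul_one, mul_zero, map_add, add_mul,
      Finset.sum_add_distrib, apply_ite (aeval f), ite_mul, map_zero, zero_mul, Finset.sum_ite_eq,
      Finset.mem_univ, if_true]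
    rw [add_comm]
    exact congrArg _ (Finset.sum_congr rfl fun _ _ => by ring)

noncomputable def lineRestriction (φ : MvPolynomial σ R) (a v : σ → R) : R[X] :=
  aeval (fun i => Polynomial.C (a i) + Polynomial.C (v i) * Polynomial.X) φ

theorem coeff_zero_lineRestriction (φ : MvPolynomial σ R) (a v : σ → R) :
    (lineRestriction φ a v).coeff 0 = eval a φ := by
  rw [Polynomial.coeff_zero_eq_eval_zero]
  induction φ using MvPolynomial.induction_on <;> simp_all [lineRestriction]

theorem derivative_lineRestriction [Fintype σ] (φ : MvPolynomial σ R) (a v : σ → R) :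
    Polynomial.derivative (lineRestriction φ a v) =
      ∑ i, lineRestriction (pderiv i φ) a v * Polynomial.C (v i) := by
  simp [lineRestriction, derivative_aeval]

theorem coeff_lineRestriction_eq_zero {K : Type*} [CommRing K] [IsDomain K] [CharZero K]
    [Fintype σ] (a v : σ → K) (j : ℕ) (φ : MvPolynomial σ K)
    (h : ∀ L : List σ, L.length = j → eval a (L.foldr (fun i q => pderiv i q) φ) = 0) :
    (lineRestriction φ a v).coeff j = 0 := by
  induction j generalizing φ with
  | zero => simpa [coeff_zero_lineRestriction] using h [] rfl
  | succ j ih =>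
    have hderiv : (Polynomial.derivative (lineRestriction φ a v)).coeff j = 0 := by
      rw [derivative_lineRestriction, Polynomial.finsetSum_coeff]
      refine Finset.sum_eq_zero fun i _ => ?_
      rw [Polynomial.coeff_mul_C, ih (pderiv i φ) fun L hL => ?_, zero_mul]
      simpa [List.foldr_append, hL] using h (L ++ [i])
    rw [Polynomial.coeff_derivative] at hderiv
    exact (mul_eq_zero.mp hderiv).resolve_right (Nat.cast_add_one_ne_zero j)

noncomputable def binaryForm (φ : MvPolynomial σ R) (a b : σ → R) : MvPolynomial (Fin 2) R :=
  aeval (fun i => X 0 * C (a i) + X 1 * C (b i)) φ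

theorem isHomogeneous_binaryForm {φ : MvPolynomial σ R} {d : ℕ} (hφ : φ.IsHomogeneous d)
    (a b : σ → R) : (binaryForm φ a b).IsHomogeneous d := by
  have h := hφ.aeval (fun i => X 0 * C (a i) + X 1 * C (b i)) fun i =>
    ((isHomogeneous_X R 0).mul (isHomogeneous_C (Fin 2) (a i))).add
      ((isHomogeneous_X R 1).mul (isHomogeneous_C (Fin 2) (b i)))
  rwa [add_zero, one_mul] at h

theorem eval_binaryForm (φ : MvPolynomial σ R) (a b : σ → R) (s t : R) :
    eval ![s, t] (binaryForm φ a b) = eval (s • a + t • b) φ := by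
  induction φ using MvPolynomial.induction_on <;> simp_all [binaryForm]

theorem aeval_X_one_binaryForm (φ : MvPolynomial σ R) (a b : σ → R) :
    aeval ![Polynomial.X, 1] (binaryForm φ a b) = lineRestriction φ b a := by
  induction φ using MvPolynomial.induction_on <;> simp_all [binaryForm, lineRestriction, add_comm]

theorem rename_swap_binaryForm (φ : MvPolynomial σ R) (a b : σ → R) :
    rename (Equiv.swap 0 1) (binaryForm φ a b) = binaryForm φ b a := by
  induction φ using MvPolynomial.induction_on <;> simp_all [binaryForm, add_comm]

theorem coeff_binaryForm {φ : MvPolynomial σ R} {d : ℕ} (hφ : φ.IsHomogeneous d)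
    (a b : σ → R) (m : Fin 2 →₀ ℕ) :
    (binaryForm φ a b).coeff m =
      if m 0 + m 1 = d then (lineRestriction φ b a).coeff (m 0) else 0 := by
  rw [← Polynomial.homogenize_eq_of_isHomogeneous (isHomogeneous_binaryForm hφ a b)
    (aeval_X_one_binaryForm φ a b), Polynomial.coeff_homogenize]

theorem coeff_binaryForm' {φ : MvPolynomial σ R} {d : ℕ} (hφ : φ.IsHomogeneous d)
    (a b : σ → R) (m : Fin 2 →₀ ℕ) :
    (binaryForm φ a b).coeff m =
      if m 0 + m 1 = d then (lineRestriction φ a b).coeff (m 1) else 0 := by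
  have hm : m = (m.equivMapDomain (Equiv.swap 0 1)).equivMapDomain (Equiv.swap 0 1) := by
    ext; simp
  rw [← rename_swap_binaryForm φ b a, hm, Finsupp.equivMapDomain_eq_mapDomain,
    coeff_rename_mapDomain _ (Equiv.injective _), coeff_binaryForm hφ]
  simp [add_comm]

theorem IsHomogeneous.foldr_pderiv {φ : MvPolynomial σ R} {n : ℕ} (hφ : φ.IsHomogeneous n)
    (L : List σ) : (L.foldr (fun i q => pderiv i q) φ).IsHomogeneous (n - L.length) := by
  induction L with
  | nil => simpa using hφ
  | cons i L ih => simpa [Nat.sub_sub] using ih.pderiv (i := i)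

theorem IsHomogeneous.foldr_pderiv_eq_zero {φ : MvPolynomial σ R} {n : ℕ}
    (hφ : φ.IsHomogeneous n) {L : List σ} (hL : n < L.length) :
    L.foldr (fun i q => pderiv i q) φ = 0 := by
  obtain ⟨i, L, rfl⟩ := List.exists_cons_of_length_pos (n.zero_le.trans_lt hL)
  have h0 : (L.foldr (fun i q => pderiv i q) φ).IsHomogeneous 0 := by
    simpa [Nat.sub_eq_zero_of_le (Nat.le_of_lt_succ hL)] using hφ.foldr_pderiv L
  rw [← totalDegree_zero_iff_isHomogeneous, totalDegree_eq_zero_iff_eq_C] at h0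
  rw [List.foldr_cons, h0, pderiv_C]

end MvPolynomial

theorem VanishesToOrder.foldr_pderiv {σ : Type*} {φ : MvPolynomial σ ℂ} {p : σ → ℂ} {y : ℕ}
    (h : VanishesToOrder φ p y) (L : List σ) :
    VanishesToOrder (L.foldr (fun i q => pderiv i q) φ) p (y - L.length) := fun L' hL' => by
  rw [← List.foldr_append]
  exact h _ (by simp only [List.length_append]; omega)

theorem VanishesToOrder.eval_smul_add_smul_eq_zero {σ : Type*} [Fintype σ]
    {φ : MvPolynomial σ ℂ} {d α β : ℕ} (hφ : φ.IsHomogeneous d) {a b : σ → ℂ}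
    (ha : VanishesToOrder φ a α) (hb : VanishesToOrder φ b β) (hd : d < α + β) (s t : ℂ) :
    eval (s • a + t • b) φ = 0 := by
  have hF : binaryForm φ a b = 0 := by
    ext m
    rw [coeff_zero]
    by_cases hm : m 0 + m 1 = d
    · rcases lt_or_ge (m 0) β with hβ | hα
      · rw [coeff_binaryForm hφ, if_pos hm]
        exact coeff_lineRestriction_eq_zero b a _ φ fun L hL => hb L (hL ▸ hβ)
      · rw [coeff_binaryForm' hφ, if_pos hm]
        exact coeff_lineRestriction_eq_zero a b _ φ fun L hL => ha L (by omega)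
    · rw [coeff_binaryForm hφ, if_neg hm]
  rw [← eval_binaryForm, hF, map_zero]

/-- If a homogeneous polynomial `Q` of degree `r` in `N` variables vanishes with
multiplicity at least `y_a` at `a ∈ ℂ^N` and with multiplicity at least `y_b` at
`b ∈ ℂ^N`, then for all scalars `s, t ∈ ℂ` it vanishes with multiplicity at least
`y_a + y_b - r` at `s • a + t • b`, i.e. at every point of the line spanned by `a`
and `b`.  (Natural subtraction makes the conclusion vacuous when `y_a + y_b ≤ r`.) -/
theorem stmt5 (N r : ℕ) (Q : MvPolynomial (Fin N) ℂ) (hQ : Q.IsHomogeneous r)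
    (a b : Fin N → ℂ) (ya yb : ℕ)
    (ha : VanishesToOrder Q a ya) (hb : VanishesToOrder Q b yb)
    (s t : ℂ) :
    VanishesToOrder Q (s • a + t • b) (ya + yb - r) := by
  intro L hL
  by_cases hLr : L.length ≤ r
  · exact VanishesToOrder.eval_smul_add_smul_eq_zero (hQ.foldr_pderiv L) (ha.foldr_pderiv L)
      (hb.foldr_pderiv L) (by omega) s t
  · rw [hQ.foldr_pderiv_eq_zero (by omega), map_zero]
end

section
/- Let $v_1,\dots,v_M \in \mathbb{C}^N$ be points in general position, meaning that every subset of $\{v_1,\dots,v_M\}$ of cardinality at most $N$ is linearly independent. Let $Q$ be a homogeneous polynomial of degree $r$ in $N$ variables over $\mathbb{C}$ that vanishes with multiplicity at least $r-1$ at each point $v_i$. Then for every subset $S \subseteq \{1,\dots,M\}$ of cardinality $k$ with $k < r$, the polynomial $Q$ vanishes with multiplicity at least $r - k$ at every point of the linear span of $\{v_i : i \in S\}$. -/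
open MvPolynomial

namespace MvPolynomial

section iteratedPDeriv

variable {R σ : Type*} [CommSemiring R]

noncomputable def iteratedPDeriv (L : List σ) : Module.End R (MvPolynomial σ R) :=
  (L.map fun i => (pderiv i).toLinearMap).prod

@[simp]
theorem iteratedPDeriv_nil (Q : MvPolynomial σ R) : iteratedPDeriv [] Q = Q := rfl

@[simp]
theorem iteratedPDeriv_cons (i : σ) (L : List σ) (Q : MvPolynomial σ R) :
    iteratedPDeriv (i :: L) Q = pderiv i (iteratedPDeriv L Q) := rfl

theorem iteratedPDeriv_append (L L' : List σ) (Q : MvPolynomial σ R) :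
    iteratedPDeriv (L ++ L') Q = iteratedPDeriv L (iteratedPDeriv L' Q) := by
  simp [iteratedPDeriv, List.prod_append]

theorem iteratedPDeriv_eq_foldr (L : List σ) (Q : MvPolynomial σ R) :
    iteratedPDeriv L Q = L.foldr (fun i q => pderiv i q) Q := by
  induction L with
  | nil => rfl
  | cons i L ih => rw [iteratedPDeriv_cons, ih, List.foldr_cons]

protected theorem IsHomogeneous.iteratedPDeriv {Q : MvPolynomial σ R} {n : ℕ}
    (hQ : Q.IsHomogeneous n) (L : List σ) : (iteratedPDeriv L Q).IsHomogeneous (n - L.length) := by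
  induction L with
  | nil => simpa using hQ
  | cons i L ih =>
    rw [iteratedPDeriv_cons, List.length_cons, Nat.sub_add_eq]
    exact ih.pderiv

end iteratedPDeriv

section dirDeriv

variable {R σ : Type*} [CommSemiring R] [Fintype σ]

noncomputable def dirDeriv (b : σ → R) : Derivation R (MvPolynomial σ R) (MvPolynomial σ R) :=
  ∑ i, b i • pderiv i

theorem dirDeriv_apply (b : σ → R) (Q : MvPolynomial σ R) :
    dirDeriv b Q = ∑ i, b i • pderiv i Q := by
  rw [dirDeriv, ← Derivation.coeFnAddMonoidHom_apply, map_sum, Finset.sum_apply]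
  rfl

@[simp]
theorem dirDeriv_X (b : σ → R) (i : σ) : dirDeriv b (X i) = C (b i) := by
  classical
  simp [dirDeriv_apply, pderiv_X, Pi.single_apply, smul_eq_C_mul]

protected theorem IsHomogeneous.dirDeriv {Q : MvPolynomial σ R} {n : ℕ}
    (hQ : Q.IsHomogeneous n) (b : σ → R) : (dirDeriv b Q).IsHomogeneous (n - 1) := by
  rw [dirDeriv_apply, ← mem_homogeneousSubmodule]
  exact Submodule.sum_mem _ fun i _ => Submodule.smul_mem _ _ hQ.pderiv

end dirDeriv

section restrictToLine

variable {R σ : Type*} [CommSemiring R]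

noncomputable def restrictToLine (a b : σ → R) : MvPolynomial σ R →ₐ[R] Polynomial R :=
  aeval fun i => Polynomial.C (a i) + Polynomial.X * Polynomial.C (b i)

@[simp]
theorem restrictToLine_X (a b : σ → R) (i : σ) :
    restrictToLine a b (X i) = Polynomial.C (a i) + Polynomial.X * Polynomial.C (b i) :=
  aeval_X _ i

@[simp]
theorem restrictToLine_C (a b : σ → R) (c : R) : restrictToLine a b (C c) = Polynomial.C c :=
  aeval_C _ c

theorem eval_restrictToLine (a b : σ → R) (t : R) (Q : MvPolynomial σ R) :
    (restrictToLine a b Q).eval t = eval (a + t • b) Q := by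
  have hpoint :
      (fun i => Polynomial.aeval t (Polynomial.C (a i) + Polynomial.X * Polynomial.C (b i))) =
        a + t • b := by
    funext i
    simp only [map_add, map_mul, Polynomial.aeval_C, Polynomial.aeval_X, Algebra.algebraMap_self,
      RingHom.id_apply, Pi.add_apply, Pi.smul_apply, smul_eq_mul]
  rw [← Polynomial.coe_aeval_eq_eval, restrictToLine, ← AlgHom.comp_apply, comp_aeval, hpoint]
  rfl

theorem derivative_restrictToLine [Fintype σ] (a b : σ → R) (Q : MvPolynomial σ R) :
    Polynomial.derivative (restrictToLine a b Q) = restrictToLine a b (dirDeriv b Q) := by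
  induction Q using MvPolynomial.induction_on with
  | C c => simp
  | add P Q hP hQ => simp only [map_add, hP, hQ]
  | mul_X P i hP =>
    simp only [map_mul, map_add, restrictToLine_X, restrictToLine_C, hP, Derivation.leibniz,
      dirDeriv_X, smul_eq_mul, Polynomial.derivative_mul, Polynomial.derivative_C,
      Polynomial.derivative_X]
    ring

theorem iterate_derivative_restrictToLine [Fintype σ] (a b : σ → R) (m : ℕ)
    (Q : MvPolynomial σ R) :
    Polynomial.derivative^[m] (restrictToLine a b Q) =
      restrictToLine a b ((dirDeriv b)^[m] Q) := by
  induction m generalizing Q with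
  | zero => rfl
  | succ m ih =>
    rw [Function.iterate_succ_apply, derivative_restrictToLine, ih, ← Function.iterate_succ_apply]

theorem factorial_mul_coeff_restrictToLine [Fintype σ] (a b : σ → R) (m : ℕ)
    (Q : MvPolynomial σ R) :
    m.factorial * (restrictToLine a b Q).coeff m = eval a ((dirDeriv b)^[m] Q) := by
  have hcoeff := Polynomial.coeff_iterate_derivative (k := m) (restrictToLine a b Q) 0
  rw [zero_add, Nat.descFactorial_self, nsmul_eq_mul, iterate_derivative_restrictToLine,
    Polynomial.coeff_zero_eq_eval_zero, eval_restrictToLine, zero_smul, add_zero] at hcoeff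
  exact hcoeff.symm

theorem natDegree_restrictToLine_le (a b : σ → R) (Q : MvPolynomial σ R) :
    (restrictToLine a b Q).natDegree ≤ Q.totalDegree := by
  have hlinear (i : σ) :
      (Polynomial.C (a i) + Polynomial.X * Polynomial.C (b i)).natDegree ≤ 1 := by
    rw [add_comm, mul_comm]
    exact Polynomial.natDegree_linear_le
  conv_lhs => rw [Q.as_sum, map_sum]
  refine Polynomial.natDegree_sum_le_of_forall_le _ _ fun d hd => ?_
  rw [restrictToLine, aeval_monomial, Algebra.algebraMap_eq_smul_one, smul_one_mul,
    Polynomial.smul_eq_C_mul]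
  refine (Polynomial.natDegree_C_mul_le _ _).trans <| (Polynomial.natDegree_prod_le _ _).trans <|
    (Finset.sum_le_sum fun i _ => ?_).trans (le_totalDegree hd)
  simpa using Polynomial.natDegree_pow_le_of_le (d i) (hlinear i)

theorem IsHomogeneous.eval_smul {Q : MvPolynomial σ R} {n : ℕ} (hQ : Q.IsHomogeneous n) (c : R)
    (x : σ → R) : eval (c • x) Q = c ^ n * eval x Q := by
  rw [eval_eq, eval_eq, Finset.mul_sum]
  refine Finset.sum_congr rfl fun d hd => ?_
  have hdeg : ∑ i ∈ d.support, d i = n := by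
    simpa [Finsupp.weight_apply, Finsupp.sum] using hQ (mem_support_iff.mp hd)
  simp only [Pi.smul_apply, smul_eq_mul, mul_pow, Finset.prod_mul_distrib,
    Finset.prod_pow_eq_pow_sum, hdeg]
  ring

theorem IsHomogeneous.reflect_restrictToLine {K : Type*} [Field K] [Infinite K]
    {Q : MvPolynomial σ K} {n : ℕ} (hQ : Q.IsHomogeneous n) (a b : σ → K) :
    (restrictToLine a b Q).reflect n = restrictToLine b a Q := by
  have hdeg := (natDegree_restrictToLine_le a b Q).trans hQ.totalDegree_le
  refine Polynomial.eq_of_infinite_eval_eq _ _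
    ((Set.finite_singleton 0).infinite_compl.mono fun t (ht : t ≠ 0) => ?_)
  let := invertibleOfNonzero (inv_ne_zero ht)
  have hreflect := Polynomial.eval₂_reflect_mul_pow (RingHom.id K) t⁻¹ n _ hdeg
  rw [invOf_eq_inv, inv_inv, Polynomial.eval₂_id, Polynomial.eval₂_id] at hreflect
  have hscale : b + t • a = t • (a + t⁻¹ • b) := by
    rw [smul_add, smul_smul, mul_inv_cancel₀ ht, one_smul, add_comm]
  change Polynomial.eval t _ = Polynomial.eval t _
  rw [eval_restrictToLine, hscale, hQ.eval_smul, ← eval_restrictToLine, ← hreflect, inv_pow,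
    mul_left_comm, mul_inv_cancel₀ (pow_ne_zero n ht), mul_one]

end restrictToLine

end MvPolynomial

section VanishesToOrder

variable {σ : Type*} {Q : MvPolynomial σ ℂ} {p : σ → ℂ} {y : ℕ}

theorem vanishesToOrder_iff :
    VanishesToOrder Q p y ↔
      ∀ L : List σ, L.length < y → eval p (iteratedPDeriv L Q) = 0 := by
  simp only [VanishesToOrder, iteratedPDeriv_eq_foldr]

theorem VanishesToOrder.eval_eq_zero (h : VanishesToOrder Q p y) (hy : 0 < y) : eval p Q = 0 :=
  h [] hy

protected theorem VanishesToOrder.iteratedPDeriv (h : VanishesToOrder Q p y) (L : List σ) :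
    VanishesToOrder (iteratedPDeriv L Q) p (y - L.length) := by
  rw [vanishesToOrder_iff] at h ⊢
  intro L' hL'
  rw [← iteratedPDeriv_append]
  exact h _ (by rw [List.length_append]; omega)

protected theorem VanishesToOrder.dirDeriv [Fintype σ] (h : VanishesToOrder Q p y)
    (b : σ → ℂ) : VanishesToOrder (dirDeriv b Q) p (y - 1) := by
  rw [vanishesToOrder_iff]
  intro L hL
  rw [dirDeriv_apply, map_sum, map_sum]
  refine Finset.sum_eq_zero fun i _ => ?_
  have hi := vanishesToOrder_iff.mp h (L ++ [i])
    (by rw [List.length_append, List.length_singleton]; omega)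
  rw [iteratedPDeriv_append, iteratedPDeriv_cons, iteratedPDeriv_nil] at hi
  rw [map_smul, smul_eval, hi, mul_zero]

theorem VanishesToOrder.iterate_dirDeriv [Fintype σ] (h : VanishesToOrder Q p y) (b : σ → ℂ)
    (m : ℕ) : VanishesToOrder ((dirDeriv b)^[m] Q) p (y - m) := by
  induction m with
  | zero => exact h
  | succ m ih => rw [Function.iterate_succ_apply', ← Nat.sub_sub]; exact ih.dirDeriv b

theorem VanishesToOrder.coeff_restrictToLine_eq_zero [Fintype σ] (h : VanishesToOrder Q p y)
    (b : σ → ℂ) {m : ℕ} (hm : m < y) : (restrictToLine p b Q).coeff m = 0 := by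
  have hcoeff := factorial_mul_coeff_restrictToLine p b m Q
  rw [(h.iterate_dirDeriv b m).eval_eq_zero (by omega)] at hcoeff
  exact (mul_eq_zero.mp hcoeff).resolve_left (by exact_mod_cast m.factorial_ne_zero)

end VanishesToOrder

theorem MvPolynomial.IsHomogeneous.eval_add_smul_of_vanishesToOrder {σ : Type*} [Fintype σ]
    {Q : MvPolynomial σ ℂ} {n : ℕ} {w : σ → ℂ} (hQ : Q.IsHomogeneous n)
    (hw : VanishesToOrder Q w (n - 1)) (z : σ → ℂ) (a : ℂ) :
    eval (z + a • w) Q = eval z Q + a * eval z (dirDeriv w Q) := by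
  have hlinear : (restrictToLine z w Q).natDegree ≤ 1 := by
    refine Polynomial.natDegree_le_iff_coeff_eq_zero.mpr fun m hm => ?_
    rw [← hQ.reflect_restrictToLine, Polynomial.coeff_reflect]
    rcases le_or_gt m n with hmn | hnm
    · rw [Polynomial.revAt_le hmn]
      exact hw.coeff_restrictToLine_eq_zero z (by omega)
    · rw [Polynomial.revAt_eq_self_of_lt hnm]
      exact Polynomial.coeff_eq_zero_of_natDegree_lt
        (((natDegree_restrictToLine_le w z Q).trans hQ.totalDegree_le).trans_lt hnm)
  have hcoeff0 := factorial_mul_coeff_restrictToLine z w 0 Q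
  have hcoeff1 := factorial_mul_coeff_restrictToLine z w 1 Q
  simp only [Nat.factorial_zero, Nat.factorial_one, Nat.cast_one, one_mul, Function.iterate_zero,
    id, Function.iterate_one] at hcoeff0 hcoeff1
  rw [← eval_restrictToLine, Polynomial.eq_X_add_C_of_natDegree_le_one hlinear, hcoeff0,
    hcoeff1]
  simp only [Polynomial.eval_add, Polynomial.eval_mul, Polynomial.eval_C, Polynomial.eval_X]
  ring

theorem eval_eq_zero_of_mem_span {ι σ : Type*} [Fintype σ] (v : ι → σ → ℂ)
    (S : Finset ι) {n : ℕ} {Q : MvPolynomial σ ℂ} (hQ : Q.IsHomogeneous n)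
    (hv : ∀ i ∈ S, VanishesToOrder Q (v i) (n - 1)) (hS : S.card < n) {p : σ → ℂ}
    (hp : p ∈ Submodule.span ℂ (v '' S)) : eval p Q = 0 := by
  classical
  induction S using Finset.induction_on generalizing n Q p with
  | empty =>
    rw [Finset.coe_empty, Set.image_empty, Submodule.span_empty, Submodule.mem_bot] at hp
    subst hp
    have hzero := hQ.eval_smul 0 0
    rwa [smul_zero, zero_pow (by simpa using hS.ne'), zero_mul] at hzero
  | insert j S hj ih =>
    rw [Finset.card_insert_of_notMem hj] at hS
    rw [Finset.coe_insert, Set.image_insert_eq, Submodule.mem_span_insert] at hp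
    obtain ⟨a, z, hz, rfl⟩ := hp
    have hvS (i : ι) (hi : i ∈ S) := hv i (Finset.mem_insert_of_mem hi)
    rw [add_comm, hQ.eval_add_smul_of_vanishesToOrder (hv j (Finset.mem_insert_self j S)),
      ih hQ hvS (by omega) hz,
      ih (hQ.dirDeriv (v j)) (fun i hi => Nat.sub_sub n 1 1 ▸ (hvS i hi).dirDeriv (v j))
        (by omega) hz, mul_zero, add_zero]

theorem stmt6_general (N M r : ℕ) (v : Fin M → (Fin N → ℂ))
    (Q : MvPolynomial (Fin N) ℂ) (hQ : Q.IsHomogeneous r)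
    (hv : ∀ i, VanishesToOrder Q (v i) (r - 1))
    (S : Finset (Fin M)) :
    ∀ p ∈ Submodule.span ℂ (v '' (S : Set (Fin M))),
      VanishesToOrder Q p (r - S.card) := by
  intro p hp
  rw [vanishesToOrder_iff]
  intro L hL
  refine eval_eq_zero_of_mem_span v S (hQ.iteratedPDeriv L) (fun i _ => ?_) (by omega) hp
  rw [Nat.sub_right_comm]
  exact (hv i).iteratedPDeriv L

/-- Let `v_1, …, v_M ∈ ℂ^N` be in general position (every subset of cardinality at
most `N` is linearly independent), and let `Q` be a homogeneous polynomial of degree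
`r` in `N` variables that vanishes with multiplicity at least `r - 1` at each `v_i`.
Then for every subset `S ⊆ {1, …, M}` of cardinality `k < r`, the polynomial `Q`
vanishes with multiplicity at least `r - k` at every point of the linear span of
`{v_i : i ∈ S}`. -/
theorem stmt6 (N M r : ℕ) (v : Fin M → (Fin N → ℂ))
    (hgen : ∀ s : Finset (Fin M), s.card ≤ N →
      LinearIndependent ℂ (fun i : s => v i))
    (Q : MvPolynomial (Fin N) ℂ) (hQ : Q.IsHomogeneous r)
    (hv : ∀ i, VanishesToOrder Q (v i) (r - 1))
    (S : Finset (Fin M)) (hS : S.card < r) :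
    ∀ p ∈ Submodule.span ℂ (v '' (S : Set (Fin M))),
      VanishesToOrder Q p (r - S.card) :=
  stmt6_general N M r v Q hQ hv S
end
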